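/- Let θ be irrational and badly approximable with constant κ > 0 (|nθ−m| ≥ κ/n for all m ∈ ℤ, n ∈ ℕ₊), let m/n be a continued fraction convergent of θ, and define n-irregular indices as those j > n with γ(j) ≠ γ(j−n) (with γ as determined by the arcs (k/8,(k+1)/8)). Then any two distinct n-irregular indices j, j' satisfy |j − j'| > κn/128. -/

import Mathlib

/-!
The maximiser of `Re (γ e^{2πia})` over `Γ₀` depends only on the arc `(k/8, (k+1)/8)` containing
`a` mod 1, and `8jθ` is never an integer. Since `(j - n)θ ≡ jθ - (nθ - m)` and `|nθ - m| < 1/n`,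
an irregular index `j` therefore has an integer `k` with `|8jθ - k| < 8/n`. For two irregular
indices `j ≠ j'` the denominator `q = 8|j - j'|` then has `|qθ - (k - k')| < 16/n`, and bad
approximability gives `κ/q < 16/n`, i.e. `|j - j'| > κn/128`.
-/

open Complex

noncomputable def Gamma0 : Finset ℂ :=
  {-2, 2 * I, -2 * I, 1 + 2 * I, 1 - 2 * I}

/-- γ(j) is the element of Γ₀ maximizing Re(γ·e^{2πijθ}). -/
def IsGammaSeq (θ : ℝ) (γ : ℕ → ℂ) : Prop :=
  ∀ j : ℕ, 1 ≤ j → γ j ∈ Gamma0 ∧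
    ∀ γ' ∈ Gamma0, (γ' * Complex.exp (2 * Real.pi * θ * j * I)).re ≤
      (γ j * Complex.exp (2 * Real.pi * θ * j * I)).re

open Real

noncomputable def arcWinner (k : ℤ) : ℂ :=
  if k % 8 ≤ 1 then 1 - 2 * I else if k % 8 = 2 then -2 * I else if k % 8 ≤ 4 then -2
  else if k % 8 = 5 then 2 * I else 1 + 2 * I

lemma arcWinner_mem (k : ℤ) : arcWinner k ∈ Gamma0 := by
  unfold arcWinner Gamma0
  split_ifs <;> simp

lemma arcWinner_emod (k : ℤ) : arcWinner (k % 8) = arcWinner k := by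
  simp only [arcWinner, Int.emod_emod_of_dvd k (dvd_refl 8)]

lemma re_mul_exp_ofReal_mul_I (z : ℂ) (x : ℝ) :
    (z * exp (x * I)).re = z.re * Real.cos x - z.im * Real.sin x := by
  simp [Complex.mul_re, Complex.exp_ofReal_mul_I_re, Complex.exp_ofReal_mul_I_im]

lemma sin_add_cos_eq_sqrt_two_mul_sin (x : ℝ) :
    Real.sin x + Real.cos x = √2 * Real.sin (x + π / 4) := by
  rw [Real.sin_add, Real.cos_pi_div_four, Real.sin_pi_div_four]
  linear_combination (-(Real.sin x + Real.cos x) / 2) * Real.mul_self_sqrt zero_le_two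

lemma sin_sub_cos_eq_sqrt_two_mul_sin (x : ℝ) :
    Real.sin x - Real.cos x = √2 * Real.sin (x - π / 4) := by
  rw [Real.sin_sub, Real.cos_pi_div_four, Real.sin_pi_div_four]
  linear_combination (-(Real.sin x - Real.cos x) / 2) * Real.mul_self_sqrt zero_le_two

lemma sin_neg_of_pi_lt_of_lt_two_pi {x : ℝ} (h1 : π < x) (h2 : x < 2 * π) : Real.sin x < 0 := by
  rw [← Real.sin_sub_two_pi]
  exact Real.sin_neg_of_neg_of_neg_pi_lt (by linarith) (by linarith)

lemma re_mul_exp_lt_arcWinner {a : ℝ} {r : ℤ} (hr0 : 0 ≤ r) (hr8 : r < 8)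
    (h1 : r < 8 * a) (h2 : 8 * a < r + 1) {z : ℂ} (hz : z ∈ Gamma0) (hne : z ≠ arcWinner r) :
    (z * exp (2 * π * a * I)).re < (arcWinner r * exp (2 * π * a * I)).re := by
  have hπ := Real.pi_pos
  have hcast : (2 * π * a * I : ℂ) = ((2 * π * a : ℝ) : ℂ) * I := by push_cast; ring
  rw [hcast, re_mul_exp_ofReal_mul_I, re_mul_exp_ofReal_mul_I]
  replace h1 : r * (π / 4) < 2 * π * a := by nlinarith
  replace h2 : 2 * π * a < (r + 1) * (π / 4) := by nlinarith
  generalize 2 * π * a = x at h1 h2 ⊢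
  simp only [Gamma0, Finset.mem_insert, Finset.mem_singleton] at hz
  interval_cases r <;> norm_num at h1 h2
  -- on each arc, `sin x`, `cos x` and `sin x ± cos x` have constant signs, which decide every
  -- comparison; record those that can be read off the arc
  all_goals
    try have hs : 0 < Real.sin x := Real.sin_pos_of_pos_of_lt_pi (by linarith) (by linarith)
    try have hs : Real.sin x < 0 := sin_neg_of_pi_lt_of_lt_two_pi (by linarith) (by linarith)
    try have hc : 0 < Real.cos x := Real.cos_pos_of_mem_Ioo ⟨by linarith, by linarith⟩
    try
      have hc : 0 < Real.cos x := by
        rw [← Real.cos_sub_two_pi]; exact Real.cos_pos_of_mem_Ioo ⟨by linarith, by linarith⟩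
    try have hc : Real.cos x < 0 := Real.cos_neg_of_pi_div_two_lt_of_lt (by linarith) (by linarith)
    try
      have hsc : 0 < Real.sin x + Real.cos x := by
        rw [sin_add_cos_eq_sqrt_two_mul_sin]
        exact mul_pos (by positivity) (Real.sin_pos_of_pos_of_lt_pi (by linarith) (by linarith))
    try
      have hsc : Real.sin x + Real.cos x < 0 := by
        rw [sin_add_cos_eq_sqrt_two_mul_sin]
        exact mul_neg_of_pos_of_neg (by positivity)
          (sin_neg_of_pi_lt_of_lt_two_pi (by linarith) (by linarith))
    try
      have hsc : 0 < Real.sin x - Real.cos x := by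
        rw [sin_sub_cos_eq_sqrt_two_mul_sin]
        exact mul_pos (by positivity) (Real.sin_pos_of_pos_of_lt_pi (by linarith) (by linarith))
    try
      have hsc : Real.sin x - Real.cos x < 0 := by
        rw [sin_sub_cos_eq_sqrt_two_mul_sin]
        exact mul_neg_of_pos_of_neg (by positivity)
          (sin_neg_of_pi_lt_of_lt_two_pi (by linarith) (by linarith))
    rcases hz with rfl | rfl | rfl | rfl | rfl <;> simp [arcWinner] at hne ⊢ <;> linarith

def IsGammaMaxAt (a : ℝ) (z : ℂ) : Prop :=
  z ∈ Gamma0 ∧ ∀ z' ∈ Gamma0, (z' * exp (2 * π * a * I)).re ≤ (z * exp (2 * π * a * I)).re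

lemma IsGammaSeq.isGammaMaxAt {θ : ℝ} {γ : ℕ → ℂ} (h : IsGammaSeq θ γ) {j : ℕ} (hj : 1 ≤ j) :
    IsGammaMaxAt (j * θ) (γ j) := by
  have hexp : (2 * π * ((j * θ : ℝ) : ℂ) * I) = 2 * π * θ * j * I := by push_cast; ring
  rw [IsGammaMaxAt, hexp]
  exact h j hj

lemma exp_two_pi_mul_add_intCast_mul_I (a : ℝ) (m : ℤ) :
    exp (2 * π * ((a + m : ℝ) : ℂ) * I) = exp (2 * π * a * I) := by
  rw [show (2 * π * ((a + m : ℝ) : ℂ) * I) = 2 * π * a * I + m * (2 * π * I) by push_cast; ring,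
    Complex.exp_add, exp_int_mul_two_pi_mul_I, mul_one]

lemma IsGammaMaxAt.add_intCast {a : ℝ} {z : ℂ} (h : IsGammaMaxAt a z) (m : ℤ) :
    IsGammaMaxAt (a + m) z := by
  rwa [IsGammaMaxAt, exp_two_pi_mul_add_intCast_mul_I]

lemma IsGammaMaxAt.eq_arcWinner {a : ℝ} {z : ℂ} (h : IsGammaMaxAt a z) (ha : 8 * a ≠ ⌊8 * a⌋) :
    z = arcWinner ⌊8 * a⌋ := by
  set k := ⌊8 * a⌋
  have hk : (k : ℝ) < 8 * a := lt_of_le_of_ne (Int.floor_le _) (Ne.symm ha)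
  have hk1 : 8 * a < k + 1 := Int.lt_floor_add_one _
  have hdiv : ((k % 8 : ℤ) : ℝ) = k - 8 * (k / 8 : ℤ) := by
    rw [Int.emod_def]; push_cast; ring
  -- shifting `a` by `-(k / 8)` moves `8 * a` into the arc `(k % 8, k % 8 + 1)`
  have h' := h.add_intCast (-(k / 8))
  rw [← arcWinner_emod]
  by_contra hne
  have hlt := re_mul_exp_lt_arcWinner (a := a + ((-(k / 8) : ℤ) : ℝ))
    (Int.emod_nonneg k (by norm_num)) (Int.emod_lt_of_pos k (by norm_num))
    (by push_cast; linarith) (by push_cast; linarith) h.1 hne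
  linarith [h'.2 (arcWinner (k % 8)) (arcWinner_mem _)]

lemma exists_intCast_abs_sub_le_of_floor_ne {x y : ℝ} (h : ⌊x⌋ ≠ ⌊y⌋) :
    ∃ k : ℤ, |x - k| ≤ |x - y| := by
  rcases le_total x y with hxy | hyx
  · have hx : x < ⌊y⌋ := Int.floor_lt.1 ((Int.floor_mono hxy).lt_of_ne h)
    refine ⟨⌊y⌋, ?_⟩
    rw [abs_of_neg (by linarith), abs_of_nonpos (by linarith)]
    linarith [Int.floor_le y]
  · have hy : y < ⌊x⌋ := Int.floor_lt.1 ((Int.floor_mono hyx).lt_of_ne (Ne.symm h))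
    refine ⟨⌊x⌋, ?_⟩
    rw [abs_of_nonneg (by linarith [Int.floor_le x]), abs_of_nonneg (by linarith)]
    linarith

lemma lt_mul_abs_sub_of_abs_sub_lt {θ κ ε : ℝ}
    (hbad : ∀ (m : ℤ) (q : ℕ), 0 < q → κ / q ≤ |(q : ℝ) * θ - m|) {p q : ℕ} (hpq : p ≠ q)
    {k l : ℤ} (hp : |(p : ℝ) * θ - k| < ε) (hq : |(q : ℝ) * θ - l| < ε) :
    κ < 2 * ε * |(p : ℝ) - q| := by
  wlog h : q < p generalizing p q k l
  · rw [abs_sub_comm]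
    exact this hpq.symm hq hp (by omega)
  have hpos : (0 : ℝ) < p - q := sub_pos.2 (Nat.cast_lt.2 h)
  have hb := hbad (k - l) (p - q) (by omega)
  rw [Nat.cast_sub h.le, div_le_iff₀ hpos] at hb
  have hdiff : |((p : ℝ) - q) * θ - ((k - l : ℤ) : ℝ)| < 2 * ε := by
    calc |((p : ℝ) - q) * θ - ((k - l : ℤ) : ℝ)| = |((p : ℝ) * θ - k) - ((q : ℝ) * θ - l)| := by
          push_cast; ring_nf
      _ ≤ |(p : ℝ) * θ - k| + |(q : ℝ) * θ - l| := abs_sub _ _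
      _ < 2 * ε := by linarith
  rw [abs_of_pos hpos]
  nlinarith

lemma exists_int_abs_sub_lt_of_irregular {θ : ℝ} (hirr : Irrational θ) {m : ℤ} {n : ℕ}
    (hconv : |(n : ℝ) * θ - m| < 1 / n) {γ : ℕ → ℂ} (hγ : IsGammaSeq θ γ) {j : ℕ} (hj : n < j)
    (hirreg : γ j ≠ γ (j - n)) : ∃ k : ℤ, |((8 * j : ℕ) : ℝ) * θ - k| < 8 / n := by
  set a := (j : ℝ) * θ
  set b := ((j - n : ℕ) : ℝ) * θ + m
  have ha8 : 8 * a = ((8 * j : ℕ) : ℝ) * θ := by push_cast; ring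
  have hb8 : 8 * b = ((8 * (j - n) : ℕ) : ℝ) * θ + ((8 * m : ℤ) : ℝ) := by push_cast; ring
  have hirr_a : Irrational (8 * a) := ha8 ▸ hirr.natCast_mul (by omega)
  have hirr_b : Irrational (8 * b) := hb8 ▸ (hirr.natCast_mul (by omega)).add_intCast _
  have hfloor : ⌊8 * a⌋ ≠ ⌊8 * b⌋ := by
    intro h
    apply hirreg
    rw [(hγ.isGammaMaxAt (by omega)).eq_arcWinner (hirr_a.ne_int _),
      ((hγ.isGammaMaxAt (by omega)).add_intCast m).eq_arcWinner (hirr_b.ne_int _), h]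
  obtain ⟨k, hk⟩ := exists_intCast_abs_sub_le_of_floor_ne hfloor
  have hab : 8 * a - 8 * b = 8 * ((n : ℝ) * θ - m) := by
    simp only [a, b, Nat.cast_sub hj.le]; ring
  refine ⟨k, ?_⟩
  calc |((8 * j : ℕ) : ℝ) * θ - k| = |8 * a - k| := by rw [ha8]
    _ ≤ |8 * a - 8 * b| := hk
    _ = 8 * |(n : ℝ) * θ - m| := by rw [hab, abs_mul, abs_of_pos (by norm_num)]
    _ < 8 * (1 / n) := by gcongr
    _ = 8 / n := by ring

theorem irregular_indices_separated_general (θ : ℝ)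
    (hirr : Irrational θ) (κ : ℝ)
    (hbad : ∀ (m : ℤ) (q : ℕ), 0 < q → κ / q ≤ |(q : ℝ) * θ - m|)
    (m : ℤ) (n : ℕ) (hn : 0 < n)
    (hconv : |(n : ℝ) * θ - m| < 1 / n)
    (γ : ℕ → ℂ) (hγ : IsGammaSeq θ γ) :
    ∀ j j' : ℕ, n < j → n < j' → γ j ≠ γ (j - n) → γ j' ≠ γ (j' - n) → j ≠ j' →
      κ * n / 128 < |(j : ℝ) - j'| := by
  intro j j' hj hj' hirreg hirreg' hne
  obtain ⟨k, hk⟩ := exists_int_abs_sub_lt_of_irregular hirr hconv hγ hj hirreg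
  obtain ⟨k', hk'⟩ := exists_int_abs_sub_lt_of_irregular hirr hconv hγ hj' hirreg'
  have hsep := lt_mul_abs_sub_of_abs_sub_lt hbad (by omega) hk hk'
  have hnR : (0 : ℝ) < n := by exact_mod_cast hn
  have hscale : 2 * (8 / n) * |((8 * j : ℕ) : ℝ) - (8 * j' : ℕ)| = 128 * |(j : ℝ) - j'| / n := by
    push_cast
    rw [← mul_sub, abs_mul, abs_of_pos (by norm_num : (0 : ℝ) < 8)]
    ring
  rw [hscale, lt_div_iff₀ hnR] at hsep
  rw [div_lt_iff₀ (by norm_num)]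
  linarith

/-- If θ is badly approximable with constant κ and m/n is a continued fraction
convergent of θ, then any two distinct n-irregular indices j, j' satisfy
|j − j'| > κn/128. -/
theorem irregular_indices_separated (θ : ℝ) (hθ : θ ∈ Set.Ioo (0 : ℝ) 1)
    (hirr : Irrational θ) (κ : ℝ) (hκ : 0 < κ)
    (hbad : ∀ (m : ℤ) (q : ℕ), 0 < q → κ / q ≤ |(q : ℝ) * θ - m|)
    (m : ℤ) (n : ℕ) (hn : 0 < n) (hcop : Int.gcd m n = 1)
    (hconv : |(n : ℝ) * θ - m| < 1 / n)
    (γ : ℕ → ℂ) (hγ : IsGammaSeq θ γ) :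
    ∀ j j' : ℕ, n < j → n < j' → γ j ≠ γ (j - n) → γ j' ≠ γ (j' - n) → j ≠ j' →
      κ * n / 128 < |(j : ℝ) - j'| :=
  irregular_indices_separated_general θ hirr κ hbad m n hn hconv γ hγ
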